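/- arXiv:1107.0393 — 3 statements merged into one kernel-verified Lean document; each statement's English description precedes it below -/
import Mathlib

section
/- There exists a sequence (Fₙ)_{n≥0} of pairwise disjoint Arakelian sets in ℂ whose union F = ⋃ₙ Fₙ is closed, has connected complement in ℂ ∪ {∞}, but is not Arakelian in ℂ. Specifically, take F₀ = {2} × ℝ and Fₙ = ({sₙ − 2^{-n}, sₙ} × [0,n]) ∪ ([sₙ − 2^{-n}, sₙ] × {n}) where sₙ = ∑_{i=0}^{n-1} 2^{-i}, for n ≥ 1; then for every r ≥ 2 the union of all bounded components of ℂ \ (closed disk D̄(0,r) ∪ F) is unbounded, so F is not Arakelian in ℂ. -/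
open Topology Filter Set

noncomputable section

/-- The complement of (the image of) `V ⊆ ℂ` in the Riemann sphere `ℂ ∪ {∞}`. -/
def sphereCompl (V : Set ℂ) : Set (OnePoint ℂ) := (OnePoint.some '' V)ᶜ

/-- The complement `(Ω ∪ {α}) \ F` in the one point compactification of `Ω`. -/
def ocCompl (Ω F : Set ℂ) : Set (OnePoint Ω) :=
  (OnePoint.some '' {x : Ω | (x : ℂ) ∈ F})ᶜ

/-- `S` is locally connected at the point `a`. -/
def LocConnAt {X : Type*} [TopologicalSpace X] (S : Set X) (a : X) : Prop :=
  ∀ U ∈ 𝓝 a, ∃ W ∈ 𝓝 a, W ⊆ U ∧ IsConnected (W ∩ S)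

/-- `F` is a relatively closed subset of `Ω`. -/
def RelClosed (Ω F : Set ℂ) : Prop :=
  F ⊆ Ω ∧ IsClosed ((fun x : Ω => (x : ℂ)) ⁻¹' F)

/-- `B` is a hole of `E` in `Ω`: a connected component of `Ω \ E` contained in a
compact subset of `Ω`. -/
def IsHole (Ω E B : Set ℂ) : Prop :=
  (∃ x ∈ Ω \ E, B = connectedComponentIn (Ω \ E) x) ∧
  ∃ K : Set ℂ, IsCompact K ∧ K ⊆ Ω ∧ B ⊆ K

/-- The union of all holes of `E` in `Ω`. -/
def holesUnion (Ω E : Set ℂ) : Set ℂ := ⋃₀ {B | IsHole Ω E B}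

/-- `F` is an Arakelian set in `Ω`: relatively closed, with `(Ω ∪ {α}) \ F`
connected and locally connected at `α`. -/
def ArakelianIn (Ω F : Set ℂ) : Prop :=
  RelClosed Ω F ∧ IsConnected (ocCompl Ω F) ∧ LocConnAt (ocCompl Ω F) OnePoint.infty

/-- `F` is an Arakelian set in `ℂ`. -/
def ArakelianC (F : Set ℂ) : Prop :=
  IsClosed F ∧ IsConnected (sphereCompl F) ∧ LocConnAt (sphereCompl F) OnePoint.infty

/-- `sₙ = ∑_{i=0}^{n-1} 2^{-i}` -/
def sN (n : ℕ) : ℝ := ∑ i ∈ Finset.range n, ((2:ℝ))⁻¹ ^ i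

/-- The sets `F₀, F₁, F₂, …` of the example. -/
def FF : ℕ → Set ℂ
  | 0 => {z : ℂ | z.re = 2}
  | (n+1) =>
      {z : ℂ | (z.re = sN (n+1) - (2:ℝ)⁻¹ ^ (n+1) ∨ z.re = sN (n+1)) ∧
        z.im ∈ Set.Icc (0:ℝ) ((n:ℝ)+1)} ∪
      {z : ℂ | z.re ∈ Set.Icc (sN (n+1) - (2:ℝ)⁻¹ ^ (n+1)) (sN (n+1)) ∧
        z.im = (n:ℝ)+1}

/-- The union of all bounded connected components of `ℂ \ E`. -/
def boundedCompUnion (E : Set ℂ) : Set ℂ :=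
  ⋃₀ {B | (∃ x ∈ Eᶜ, B = connectedComponentIn Eᶜ x) ∧ Bornology.IsBounded B}

/-!
For `n ≥ 1`, `FF n` is an arch: two vertical legs of height `n` over `tN n < sN n`, joined at
the top. The strips `[tN n, sN n]` are disjoint and accumulate only at the line `FF 0`, which
gives disjointness and closedness of the union `F`. Each arch is open at the bottom, so every
point of `ℂ \ F` left of `FF 0` is joined to the lower half-plane, and `ℂ \ F` has two unbounded
connected pieces, both adherent to `∞`. But all arches stand on the segment `[1/2, 2)`, so a
closed disk `D̄` of radius `r ≥ 2` closes them off: the inside of a tall arch outside the disk is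
a bounded component of `ℂ \ (D̄ ∪ F)`, arbitrarily far out. Local connectedness of the sphere
complement at `∞` would confine all such components to a fixed disk.
-/

open Bornology Complex Metric

local notation "∞" => (OnePoint.infty : OnePoint ℂ)

section PointAtInfinity

variable {S F : Set ℂ}

lemma coe_mem_coe_image_union_infty {s : Set ℂ} {z : ℂ} :
    OnePoint.some z ∈ OnePoint.some '' s ∪ {∞} ↔ z ∈ s := by
  simp [OnePoint.coe_injective.mem_set_image, OnePoint.coe_ne_infty]

lemma coe_mem_sphereCompl {z : ℂ} : OnePoint.some z ∈ sphereCompl F ↔ z ∉ F :=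
  not_congr OnePoint.coe_injective.mem_set_image

lemma infty_mem_sphereCompl : ∞ ∈ sphereCompl F := OnePoint.infty_notMem_image_coe

lemma coe_image_union_infty_inter_sphereCompl (s : Set ℂ) :
    (OnePoint.some '' s ∪ {∞}) ∩ sphereCompl F = OnePoint.some '' (s \ F) ∪ {∞} := by
  rw [sphereCompl, OnePoint.compl_image_coe, ← inter_union_distrib_right,
    ← image_inter OnePoint.coe_injective, Set.sdiff_eq]

lemma infty_mem_closure_coe_image (hS : ¬ IsBounded S) : ∞ ∈ closure (OnePoint.some '' S) := by
  refine (mem_closure_iff_nhds_basis OnePoint.hasBasis_nhds_infty).2 fun K hK => ?_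
  obtain ⟨z, hzS, hzK⟩ := not_subset.1 fun h => hS (hK.2.isBounded.subset h)
  exact ⟨z, mem_image_of_mem _ hzS, Or.inl (mem_image_of_mem _ hzK)⟩

lemma closure_coe_image_subset (hS : IsBounded S) :
    closure (OnePoint.some '' S) ⊆ OnePoint.some '' closure S :=
  closure_minimal (image_mono subset_closure)
    (hS.isCompact_closure.image OnePoint.continuous_coe).isClosed

lemma isConnected_coe_image_union_infty (hS : IsPreconnected S) (hb : ¬ IsBounded S) :
    IsConnected (OnePoint.some '' S ∪ {∞}) := by
  refine ⟨⟨∞, Or.inr rfl⟩, (hS.image _ OnePoint.continuous_coe.continuousOn).subset_closure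
    subset_union_left (union_subset subset_closure ?_)⟩
  exact singleton_subset_iff.2 (infty_mem_closure_coe_image hb)

lemma isConnected_coe_image_union_union_infty {T : Set ℂ} (hS : IsPreconnected S)
    (hSb : ¬ IsBounded S) (hT : IsPreconnected T) (hTb : ¬ IsBounded T) :
    IsConnected (OnePoint.some '' (S ∪ T) ∪ {∞}) := by
  rw [image_union, union_union_distrib_right]
  exact (isConnected_coe_image_union_infty hS hSb).union ⟨∞, Or.inr rfl, Or.inr rfl⟩
    (isConnected_coe_image_union_infty hT hTb)

lemma closure_inter_subset_connectedComponentIn {X : Type*} [TopologicalSpace X] {U : Set X}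
    {x : X} (hx : x ∈ U) : closure (connectedComponentIn U x) ∩ U ⊆ connectedComponentIn U x :=
  fun y ⟨hyC, hyU⟩ =>
    (isPreconnected_connectedComponentIn.subset_closure (subset_insert y _)
      (insert_subset hyC subset_closure)).subset_connectedComponentIn
      (mem_insert_of_mem _ (mem_connectedComponentIn hx))
      (insert_subset hyU (connectedComponentIn_subset _ _)) (mem_insert y _)

end PointAtInfinity

section Rectangles

lemma convex_reProdIm {s t : Set ℝ} (hs : Convex ℝ s) (ht : Convex ℝ t) :
    Convex ℝ (s ×ℂ t) :=
  (hs.linear_preimage reLm).inter (ht.linear_preimage imLm)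

lemma univ_reProdIm_univ : (univ : Set ℝ) ×ℂ univ = univ := by simp [reProdIm]

lemma not_isBounded_reProdIm {s t : Set ℝ} (hs : s.Nonempty) (ht : ¬ BddBelow t) :
    ¬ IsBounded (s ×ℂ t) := by
  obtain ⟨x, hx⟩ := hs
  refine fun hb => ht ?_
  obtain ⟨C, hC⟩ := isBounded_iff_forall_norm_le.1 hb
  refine ⟨-C, fun y hy => ?_⟩
  have := (abs_im_le_norm ⟨x, y⟩).trans (hC ⟨x, y⟩ ⟨hx, hy⟩)
  linarith [neg_abs_le y]

variable {s : Set ℝ} {a b c d : ℝ}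

-- The vertical line through any `y ∈ s \ [a, b]` joins the parts of the band below and above
-- the rectangle.
lemma isPreconnected_reProdIm_univ_diff (hs : Convex ℝ s) {x : ℝ} (hx : x ∈ s \ Icc a b) :
    IsPreconnected ((s ×ℂ univ) \ (Icc a b ×ℂ Icc c d)) := by
  have hbelow : IsPreconnected (s ×ℂ Iio c) := (convex_reProdIm hs (convex_Iio c)).isPreconnected
  have habove : IsPreconnected (s ×ℂ Ioi d) := (convex_reProdIm hs (convex_Ioi d)).isPreconnected
  have joined : ∀ y ∈ s \ Icc a b, IsPreconnected ({y} ×ℂ univ ∪ s ×ℂ Iio c ∪ s ×ℂ Ioi d) ∧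
      {y} ×ℂ univ ∪ s ×ℂ Iio c ∪ s ×ℂ Ioi d ⊆ (s ×ℂ univ) \ (Icc a b ×ℂ Icc c d) := by
    intro y hy
    refine ⟨(((convex_reProdIm (convex_singleton y) convex_univ).isPreconnected.union
      (s := {y} ×ℂ univ) (t := s ×ℂ Iio c) (⟨y, c - 1⟩ : ℂ) ⟨rfl, trivial⟩
      ⟨hy.1, show c - 1 < c by linarith⟩ hbelow).union (t := s ×ℂ Ioi d) (⟨y, d + 1⟩ : ℂ)
      (Or.inl ⟨rfl, trivial⟩) ⟨hy.1, show d < d + 1 by linarith⟩ habove), ?_⟩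
    rintro z ((⟨hz : z.re = y, -⟩ | ⟨hz, hzc : z.im < c⟩) | ⟨hz, hzd : d < z.im⟩)
    · exact ⟨⟨(hz ▸ hy.1 : z.re ∈ s), trivial⟩, fun h => hy.2 (hz ▸ h.1)⟩
    · exact ⟨⟨hz, trivial⟩, fun h => not_le.2 hzc h.2.1⟩
    · exact ⟨⟨hz, trivial⟩, fun h => not_le.2 hzd h.2.2⟩
  refine isPreconnected_of_forall ⟨x, c - 1⟩ fun z ⟨⟨hzs, _⟩, hz⟩ => ?_
  by_cases hzab : z.re ∈ Icc a b
  · obtain ⟨hpre, hsub⟩ := joined x hx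
    refine ⟨_, hsub, Or.inl (Or.inr ⟨hx.1, show c - 1 < c by linarith⟩), ?_, hpre⟩
    rcases not_and_or.1 (fun h => hz ⟨hzab, h⟩) with h | h
    · exact Or.inl (Or.inr ⟨hzs, not_le.1 h⟩)
    · exact Or.inr ⟨hzs, not_le.1 h⟩
  · obtain ⟨hpre, hsub⟩ := joined z.re ⟨hzs, hzab⟩
    exact ⟨_, hsub, Or.inl (Or.inr ⟨hx.1, show c - 1 < c by linarith⟩),
      Or.inl (Or.inl ⟨rfl, trivial⟩), hpre⟩

lemma not_isBounded_reProdIm_univ_diff (hs : s.Nonempty) :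
    ¬ IsBounded ((s ×ℂ univ) \ (Icc a b ×ℂ Icc c d)) := fun h =>
  not_isBounded_reProdIm (t := Iio c) hs (not_bddBelow_Iio c)
    (h.subset fun _ hz => ⟨⟨hz.1, trivial⟩, fun h => not_le.2 hz.2 h.2.1⟩)

def square (R : ℝ) : Set ℂ := Icc (-R) R ×ℂ Icc (-R) R

lemma isCompact_square (R : ℝ) : IsCompact (square R) := isCompact_Icc.reProdIm isCompact_Icc

lemma closedBall_subset_square (R : ℝ) : closedBall (0 : ℂ) R ⊆ square R := fun z hz => by
  rw [mem_closedBall_zero_iff] at hz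
  exact ⟨abs_le.1 ((abs_re_le_norm z).trans hz), abs_le.1 ((abs_im_le_norm z).trans hz)⟩

end Rectangles

section Arakelian

variable {F : Set ℂ}

lemma locConnAt_sphereCompl_infty
    (h : ∀ᶠ R in atTop, IsConnected (OnePoint.some '' ((square R)ᶜ \ F) ∪ {∞})) :
    LocConnAt (sphereCompl F) ∞ := by
  intro U hU
  obtain ⟨K, ⟨-, hK⟩, hKU⟩ := OnePoint.hasBasis_nhds_infty.mem_iff.1 hU
  obtain ⟨ρ, hρ⟩ := hK.isBounded.subset_closedBall 0
  obtain ⟨R, hR, hρR⟩ := (h.and (eventually_ge_atTop ρ)).exists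
  have hKR : K ⊆ square R := hρ.trans ((closedBall_subset_closedBall hρR).trans
    (closedBall_subset_square R))
  refine ⟨OnePoint.some '' (square R)ᶜ ∪ {∞}, OnePoint.hasBasis_nhds_infty.mem_of_mem
    ⟨(isCompact_square R).isClosed, isCompact_square R⟩,
    (union_subset_union_left _ (image_mono (compl_subset_compl.2 hKR))).trans hKU, ?_⟩
  rwa [coe_image_union_infty_inter_sphereCompl]

lemma arakelianC_of_isCompact (hF : IsCompact F) (hc : IsPreconnected Fᶜ) : ArakelianC F := by
  have hsq : ∀ R, IsPreconnected (square R)ᶜ ∧ ¬ IsBounded (square R)ᶜ := fun R => by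
    rw [compl_eq_univ_sdiff, ← univ_reProdIm_univ]
    exact ⟨isPreconnected_reProdIm_univ_diff convex_univ (x := R + 1)
      ⟨trivial, fun h => by linarith [h.2]⟩, not_isBounded_reProdIm_univ_diff univ_nonempty⟩
  refine ⟨hF.isClosed, ?_, locConnAt_sphereCompl_infty ?_⟩
  · rw [sphereCompl, OnePoint.compl_image_coe]
    exact isConnected_coe_image_union_infty hc fun h =>
      NormedSpace.unbounded_univ ℝ ℂ (by simpa using h.union hF.isBounded)
  · obtain ⟨ρ, hρ⟩ := hF.isBounded.subset_closedBall 0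
    filter_upwards [eventually_ge_atTop ρ] with R hR
    rw [sdiff_eq_left.2 (disjoint_compl_left_iff_subset.2
      (hρ.trans ((closedBall_subset_closedBall hR).trans (closedBall_subset_square R))))]
    exact isConnected_coe_image_union_infty (hsq R).1 (hsq R).2

lemma arakelianC_setOf_re_eq (c : ℝ) : ArakelianC {z : ℂ | z.re = c} := by
  have hcompl : {z : ℂ | z.re = c}ᶜ = Iio c ×ℂ univ ∪ Ioi c ×ℂ univ := by
    ext z
    simp [mem_reProdIm]
  refine ⟨isClosed_eq continuous_re continuous_const, ?_, locConnAt_sphereCompl_infty ?_⟩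
  · rw [sphereCompl, OnePoint.compl_image_coe, hcompl]
    exact isConnected_coe_image_union_union_infty
      (convex_reProdIm (convex_Iio c) convex_univ).isPreconnected
      (not_isBounded_reProdIm nonempty_Iio not_bddBelow_univ)
      (convex_reProdIm (convex_Ioi c) convex_univ).isPreconnected
      (not_isBounded_reProdIm nonempty_Ioi not_bddBelow_univ)
  · refine Eventually.of_forall fun R => ?_
    rw [Set.sdiff_eq, inter_comm, ← Set.sdiff_eq, hcompl, union_sdiff_distrib]
    exact isConnected_coe_image_union_union_infty
      (isPreconnected_reProdIm_univ_diff (convex_Iio c) (x := min c (-R) - 1)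
        ⟨show min c (-R) - 1 < c by linarith [min_le_left c (-R)],
          fun h => by linarith [h.1, min_le_right c (-R)]⟩)
      (not_isBounded_reProdIm_univ_diff nonempty_Iio)
      (isPreconnected_reProdIm_univ_diff (convex_Ioi c) (x := max c R + 1)
        ⟨show c < max c R + 1 by linarith [le_max_left c R],
          fun h => by linarith [h.2, le_max_right c R]⟩)
      (not_isBounded_reProdIm_univ_diff nonempty_Ioi)

theorem ArakelianC.isBounded_boundedCompUnion (hF : ArakelianC F) (r : ℝ) :
    IsBounded (boundedCompUnion (closedBall 0 r ∪ F)) := by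
  obtain ⟨hFc, -, hloc⟩ := hF
  obtain ⟨W, hW, hWU, hWS⟩ := hloc _ (OnePoint.hasBasis_nhds_infty.mem_of_mem
    ⟨isClosed_closedBall, isCompact_closedBall (0 : ℂ) r⟩)
  obtain ⟨K, ⟨-, hK⟩, hKW⟩ := OnePoint.hasBasis_nhds_infty.mem_iff.1 hW
  obtain ⟨ρ, hρ⟩ := hK.isBounded.subset_closedBall 0
  refine (isBounded_closedBall (x := (0 : ℂ)) (r := ρ)).subset (sUnion_subset ?_)
  rintro C ⟨⟨x, hx, rfl⟩, hCb⟩ z hz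
  by_contra hzρ
  have hzE := connectedComponentIn_subset _ _ hz
  have key :
      W ∩ sphereCompl F ⊆ OnePoint.some '' connectedComponentIn (closedBall 0 r ∪ F)ᶜ x := by
    refine hWS.isPreconnected.subset_of_closure_inter_subset (OnePoint.isOpen_image_coe.2
      (isClosed_closedBall.union hFc).isOpen_compl.connectedComponentIn)
      ⟨z, ⟨hKW (coe_mem_coe_image_union_infty.2 fun hzK => hzρ (hρ hzK)),
        coe_mem_sphereCompl.2 fun h => hzE (Or.inr h)⟩, mem_image_of_mem _ hz⟩ ?_
    rintro p ⟨hp, hpW, hpS⟩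
    obtain ⟨y, hy, rfl⟩ := closure_coe_image_subset hCb hp
    refine mem_image_of_mem _ (closure_inter_subset_connectedComponentIn hx ⟨hy, ?_⟩)
    rintro (hyr | hyF)
    · exact coe_mem_coe_image_union_infty.1 (hWU hpW) hyr
    · exact coe_mem_sphereCompl.1 hpS hyF
  exact OnePoint.infty_notMem_image_coe (key ⟨mem_of_mem_nhds hW, infty_mem_sphereCompl⟩)

end Arakelian

section Arch

variable {s : Set ℝ} {a b h : ℝ}

def arch (a b h : ℝ) : Set ℂ := ({a, b} ×ℂ Icc 0 h) ∪ (Icc a b ×ℂ {h})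

lemma isCompact_arch : IsCompact (arch a b h) :=
  ((toFinite _).isCompact.reProdIm isCompact_Icc).union (isCompact_Icc.reProdIm isCompact_singleton)

lemma compl_arch (hab : a ≤ b) (hh : 0 ≤ h) :
    (arch a b h)ᶜ = (Icc a b ×ℂ Icc 0 h)ᶜ ∪ Ioo a b ×ℂ Iio h := by
  ext z
  simp only [arch, mem_compl_iff, mem_union, mem_reProdIm, mem_insert_iff, mem_singleton_iff,
    mem_Icc, mem_Ioo, mem_Iio]
  grind

lemma arch_subset (hab : a ≤ b) (hh : 0 ≤ h) : arch a b h ⊆ Icc a b ×ℂ Icc 0 h := by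
  rw [← compl_subset_compl, compl_arch hab hh]
  exact subset_union_left

lemma Icc_reProdIm_Icc_diff_arch_subset (hab : a ≤ b) (hh : 0 ≤ h) :
    (Icc a b ×ℂ Icc 0 h) \ arch a b h ⊆ Ioo a b ×ℂ Ico 0 h := by
  rintro z ⟨hz, hza⟩
  rw [← mem_compl_iff, compl_arch hab hh] at hza
  rcases hza with hz' | hz'
  · exact absurd hz hz'
  · exact ⟨hz'.1, hz.2.1, hz'.2⟩

lemma Ioo_reProdIm_Ioo_subset_compl_arch (hab : a ≤ b) (hh : 0 ≤ h) :
    Ioo a b ×ℂ Ioo 0 h ⊆ (arch a b h)ᶜ := by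
  rw [compl_arch hab hh]
  exact fun z hz => Or.inr ⟨hz.1, hz.2.2⟩

lemma isPreconnected_reProdIm_univ_diff_arch (hs : Convex ℝ s) {x y : ℝ} (hx : x ∈ s \ Icc a b)
    (hy : y ∈ s ∩ Ioo a b) (hh : 0 ≤ h) : IsPreconnected ((s ×ℂ univ) \ arch a b h) := by
  rw [Set.sdiff_eq, compl_arch (hy.2.1.trans hy.2.2).le hh, inter_union_distrib_left,
    ← Set.sdiff_eq]
  exact (isPreconnected_reProdIm_univ_diff hs hx).union (⟨y, -1⟩ : ℂ)
    ⟨⟨hy.1, trivial⟩, fun h' => by linarith [h'.2.1]⟩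
    ⟨⟨hy.1, trivial⟩, hy.2, show (-1 : ℝ) < h by linarith⟩
    ((convex_reProdIm hs convex_univ).inter
      (convex_reProdIm (convex_Ioo a b) (convex_Iio h))).isPreconnected

lemma isPreconnected_compl_arch (hab : a < b) (hh : 0 ≤ h) : IsPreconnected (arch a b h)ᶜ := by
  rw [compl_eq_univ_sdiff, ← univ_reProdIm_univ]
  exact isPreconnected_reProdIm_univ_diff_arch convex_univ (x := b + 1)
    ⟨trivial, fun h' => by linarith [h'.2]⟩ (y := (a + b) / 2)
    ⟨trivial, by linarith, by linarith⟩ hh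

end Arch

section Example

/-- The left foot `sₙ - 2⁻ⁿ` of the arch `FF n`; its right foot is `sN n`. -/
def tN (n : ℕ) : ℝ := sN n - 2⁻¹ ^ n

lemma sN_eq (n : ℕ) : sN n = 2 - 2 * 2⁻¹ ^ n := by
  induction n with
  | zero => simp [sN]
  | succ n ih => rw [sN, Finset.sum_range_succ, ← sN, ih]; ring

lemma tN_eq (n : ℕ) : tN n = 2 - 3 * 2⁻¹ ^ n := by
  rw [tN, sN_eq]; ring

lemma tN_zero : tN 0 = -1 := by norm_num [tN_eq]

lemma tN_lt_sN (n : ℕ) : tN n < sN n := by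
  rw [tN]; linarith [pow_pos (by norm_num : (0 : ℝ) < 2⁻¹) n]

lemma sN_lt_two (n : ℕ) : sN n < 2 := by
  rw [sN_eq]; linarith [pow_pos (by norm_num : (0 : ℝ) < 2⁻¹) n]

lemma tN_lt_two (n : ℕ) : tN n < 2 := (tN_lt_sN n).trans (sN_lt_two n)

lemma sN_lt_tN_succ (n : ℕ) : sN n < tN (n + 1) := by
  rw [tN_eq, sN_eq, pow_succ]; linarith [pow_pos (by norm_num : (0 : ℝ) < 2⁻¹) n]

lemma tN_strictMono : StrictMono tN := fun m n hmn => by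
  rw [tN_eq, tN_eq]
  linarith [pow_lt_pow_right_of_lt_one₀ (by norm_num : (0 : ℝ) < 2⁻¹) (by norm_num) hmn]

lemma exists_lt_tN {x : ℝ} (hx : x < 2) : ∃ n, x < tN n := by
  obtain ⟨n, hn⟩ := exists_pow_lt_of_lt_one (by linarith : 0 < (2 - x) / 3)
    (by norm_num : (2⁻¹ : ℝ) < 1)
  exact ⟨n, by rw [tN_eq]; linarith⟩

lemma exists_mem_Ico_tN {x : ℝ} (h1 : tN 1 ≤ x) (h2 : x < 2) :
    ∃ k, x ∈ Ico (tN (k + 1)) (tN (k + 2)) := by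
  obtain ⟨n, hlt, hle⟩ := exists_nat_pow_near_of_lt_one (by linarith : 0 < (2 - x) / 3)
    (by rw [tN_eq] at h1; linarith) (by norm_num : (0 : ℝ) < 2⁻¹) (by norm_num)
  obtain _ | k := n
  · rw [tN_eq] at h1; norm_num at hlt h1; linarith
  · exact ⟨k, by rw [tN_eq]; linarith, by rw [tN_eq]; linarith⟩

lemma FF_succ (n : ℕ) : FF (n + 1) = arch (tN (n + 1)) (sN (n + 1)) ((n : ℝ) + 1) := rfl

lemma mem_FF_succ {n : ℕ} {z : ℂ} (hz : z ∈ FF (n + 1)) :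
    z ∈ Icc (tN (n + 1)) (sN (n + 1)) ×ℂ Icc 0 ((n : ℝ) + 1) :=
  arch_subset (tN_lt_sN _).le (by positivity) hz

lemma isClosed_FF (n : ℕ) : IsClosed (FF n) := by
  cases n with
  | zero => exact isClosed_eq continuous_re continuous_const
  | succ n => exact isCompact_arch.isClosed

lemma re_le_two_of_mem_FF {n : ℕ} {z : ℂ} (hz : z ∈ FF n) : z.re ≤ 2 := by
  cases n with
  | zero => exact le_of_eq hz
  | succ n => exact (mem_FF_succ hz).1.2.trans (sN_lt_two _).le

lemma tN_le_re_of_mem_FF {n : ℕ} {z : ℂ} (hz : z ∈ FF n) : tN n ≤ z.re := by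
  cases n with
  | zero => rw [tN_zero, show z.re = 2 from hz]; norm_num
  | succ n => exact (mem_FF_succ hz).1.1

lemma re_lt_tN_of_mem_FF_succ {m n : ℕ} {z : ℂ} (hz : z ∈ FF (m + 1)) (hmn : m + 1 < n) :
    z.re < tN n :=
  ((mem_FF_succ hz).1.2.trans_lt (sN_lt_tN_succ _)).trans_le (tN_strictMono.monotone hmn)

lemma pairwise_disjoint_FF : Pairwise (fun m n => Disjoint (FF m) (FF n)) := by
  refine (pairwise_disjoint_on FF).2 fun m n hmn => disjoint_left.2 fun z hzm hzn => ?_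
  obtain _ | n := n
  · exact absurd hmn (Nat.not_lt_zero m)
  obtain _ | m := m
  · exact (sN_lt_two _).not_ge (hzm ▸ (mem_FF_succ hzn).1.2)
  · exact (re_lt_tN_of_mem_FF_succ hzm hmn).not_ge (tN_le_re_of_mem_FF hzn)

lemma isClosed_iUnion_FF : IsClosed (⋃ n, FF n) := by
  refine isOpen_compl_iff.1 (isOpen_iff_mem_nhds.2 fun z hz => ?_)
  rcases lt_or_gt_of_ne fun h : z.re = 2 => hz (mem_iUnion.2 ⟨0, h⟩) with hlt | hgt
  · obtain ⟨N, hN⟩ := exists_lt_tN hlt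
    have hfin : IsClosed (⋃ n ∈ Finset.range N, FF n) :=
      isClosed_biUnion_finset fun n _ => isClosed_FF n
    have hz' : z ∈ (⋃ n ∈ Finset.range N, FF n)ᶜ :=
      fun h => hz (iUnion₂_subset (fun n _ => subset_iUnion FF n) h)
    filter_upwards [hfin.isOpen_compl.mem_nhds hz',
      (isOpen_lt continuous_re continuous_const).mem_nhds hN] with w hw hwN
    simp only [mem_compl_iff, mem_iUnion, not_exists, Finset.mem_range] at hw ⊢
    intro n hwn
    by_cases hn : n < N
    · exact hw n hn hwn
    · exact (tN_strictMono.monotone (not_lt.1 hn)).not_gt (hwN.trans_le' (tN_le_re_of_mem_FF hwn))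
  · filter_upwards [(isOpen_lt continuous_const continuous_re).mem_nhds hgt] with w hw
    simp only [mem_compl_iff, mem_iUnion, not_exists]
    exact fun n hwn => (re_le_two_of_mem_FF hwn).not_gt hw

lemma tN_one_le_re_of_mem_FF {n : ℕ} {z : ℂ} (hz : z ∈ FF n) (h2 : z.re < 2) :
    tN 1 ≤ z.re ∧ 0 ≤ z.im := by
  obtain _ | n := n
  · exact absurd hz h2.ne
  · exact ⟨(tN_strictMono.monotone (by omega)).trans (mem_FF_succ hz).1.1, (mem_FF_succ hz).2.1⟩

lemma mem_FF_of_mem_iUnion {k : ℕ} {z : ℂ} (hzk : z.re ∈ Ico (tN (k + 1)) (tN (k + 2)))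
    (hz : z ∈ ⋃ n, FF n) : z ∈ FF (k + 1) := by
  obtain ⟨n, hn⟩ := mem_iUnion.1 hz
  obtain _ | m := n
  · exact absurd hn (hzk.2.trans (tN_lt_two _)).ne
  obtain hmk | rfl | hkm := lt_trichotomy m k
  · exact absurd hzk.1 (not_le.2 (re_lt_tN_of_mem_FF_succ hn (by omega)))
  · exact hn
  · exact absurd hzk.2
      (not_lt.2 ((tN_strictMono.monotone (by omega)).trans (tN_le_re_of_mem_FF hn)))

lemma arakelianC_FF (n : ℕ) : ArakelianC (FF n) := by
  cases n with
  | zero => exact arakelianC_setOf_re_eq 2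
  | succ n =>
    rw [FF_succ]
    exact arakelianC_of_isCompact isCompact_arch
      (isPreconnected_compl_arch (tN_lt_sN _) (by positivity))

def leftPart (k : ℕ) : Set ℂ :=
  Iio 2 ×ℂ Iio 0 ∪ Iio (tN 1) ×ℂ univ ∪ (Ico (tN (k + 1)) (tN (k + 2)) ×ℂ univ) \ FF (k + 1)

lemma isPreconnected_leftPart (k : ℕ) : IsPreconnected (leftPart k) := by
  have hcell : IsPreconnected ((Ico (tN (k + 1)) (tN (k + 2)) ×ℂ univ) \ FF (k + 1)) := by
    have h1 := tN_lt_sN (k + 1)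
    have h2 := sN_lt_tN_succ (k + 1)
    rw [FF_succ]
    exact isPreconnected_reProdIm_univ_diff_arch (convex_Ico _ _)
      (x := (sN (k + 1) + tN (k + 2)) / 2) ⟨⟨by linarith, by linarith⟩, fun h => by linarith [h.2]⟩
      (y := (tN (k + 1) + sN (k + 1)) / 2) ⟨⟨by linarith, by linarith⟩, by linarith, by linarith⟩
      (by positivity)
  have hleft : IsPreconnected (Iio 2 ×ℂ Iio 0 ∪ Iio (tN 1) ×ℂ univ) :=
    (convex_reProdIm (convex_Iio 2) (convex_Iio 0)).isPreconnected.union (⟨tN 1 - 1, -1⟩ : ℂ)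
      ⟨show tN 1 - 1 < 2 by linarith [tN_lt_two 1], show (-1 : ℝ) < 0 by norm_num⟩
      ⟨show tN 1 - 1 < tN 1 by linarith, trivial⟩
      (convex_reProdIm (convex_Iio _) convex_univ).isPreconnected
  exact hleft.union (⟨tN (k + 1), -1⟩ : ℂ) (Or.inl ⟨tN_lt_two _, by norm_num⟩)
    ⟨⟨⟨le_rfl, tN_strictMono (by omega)⟩, trivial⟩, fun h => by linarith [(mem_FF_succ h).2.1]⟩
    hcell

lemma leftPart_subset_compl (k : ℕ) : leftPart k ⊆ (⋃ n, FF n)ᶜ := by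
  rintro z ((⟨h2, him⟩ | ⟨h1, -⟩) | ⟨⟨hzk, -⟩, hzF⟩) hzA
  · obtain ⟨n, hn⟩ := mem_iUnion.1 hzA
    exact (tN_one_le_re_of_mem_FF hn h2).2.not_gt him
  · obtain ⟨n, hn⟩ := mem_iUnion.1 hzA
    exact (tN_one_le_re_of_mem_FF hn (h1.trans (tN_lt_two 1))).1.not_gt h1
  · exact hzF (mem_FF_of_mem_iUnion hzk hzA)

lemma compl_iUnion_FF : (⋃ n, FF n)ᶜ = (⋃ k, leftPart k) ∪ Ioi 2 ×ℂ univ := by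
  refine Subset.antisymm (fun z hz => ?_) (union_subset (iUnion_subset leftPart_subset_compl) ?_)
  · rcases lt_trichotomy z.re 2 with h | h | h
    · by_cases h1 : z.re < tN 1
      · exact Or.inl (mem_iUnion.2 ⟨0, Or.inl (Or.inr ⟨h1, trivial⟩)⟩)
      · obtain ⟨k, hk⟩ := exists_mem_Ico_tN (not_lt.1 h1) h
        exact Or.inl (mem_iUnion.2 ⟨k, Or.inr ⟨⟨hk, trivial⟩, fun h' => hz (mem_iUnion.2 ⟨_, h'⟩)⟩⟩)
    · exact absurd (mem_iUnion.2 ⟨0, h⟩) hz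
    · exact Or.inr ⟨h, trivial⟩
  · intro z hz hzA
    obtain ⟨n, hn⟩ := mem_iUnion.1 hzA
    exact (re_le_two_of_mem_FF hn).not_gt hz.1

lemma isConnected_sphereCompl_iUnion_FF : IsConnected (sphereCompl (⋃ n, FF n)) := by
  rw [sphereCompl, OnePoint.compl_image_coe, compl_iUnion_FF]
  refine isConnected_coe_image_union_union_infty
    (isPreconnected_iUnion
      ⟨⟨0, -1⟩, mem_iInter.2 fun _ => Or.inl (Or.inl ⟨by norm_num, by norm_num⟩)⟩
      isPreconnected_leftPart) (fun h => ?_)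
    (convex_reProdIm (convex_Ioi 2) convex_univ).isPreconnected
    (not_isBounded_reProdIm nonempty_Ioi not_bddBelow_univ)
  exact not_isBounded_reProdIm nonempty_Iio (not_bddBelow_Iio 0)
    (h.subset fun z hz => mem_iUnion.2 ⟨0, Or.inl (Or.inl hz)⟩)

lemma connectedComponentIn_subset_Ioo_reProdIm_Ioo {r : ℝ} (hr : 2 ≤ r) (n : ℕ) {z : ℂ}
    (hz : z ∈ Ioo (tN (n + 1)) (sN (n + 1)) ×ℂ Ioo 0 ((n : ℝ) + 1))
    (hzE : z ∈ (closedBall 0 r ∪ ⋃ m, FF m)ᶜ) :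
    connectedComponentIn (closedBall 0 r ∪ ⋃ m, FF m)ᶜ z ⊆
      Ioo (tN (n + 1)) (sN (n + 1)) ×ℂ Ioo 0 ((n : ℝ) + 1) := by
  refine isPreconnected_connectedComponentIn.subset_of_closure_inter_subset
    (isOpen_Ioo.reProdIm isOpen_Ioo) ⟨z, mem_connectedComponentIn hzE, hz⟩ ?_
  rintro w ⟨hw, hwC⟩
  have hwE := connectedComponentIn_subset _ _ hwC
  rw [closure_reProdIm, closure_Ioo (tN_lt_sN _).ne, closure_Ioo (by positivity)] at hw
  obtain ⟨hwre, hw0, hwh⟩ := Icc_reProdIm_Icc_diff_arch_subset (tN_lt_sN _).le (by positivity)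
    ⟨hw, fun h => hwE (Or.inr (mem_iUnion.2 ⟨n + 1, h⟩))⟩
  -- a limit point on the bottom edge lies in `[tN (n + 1), sN (n + 1)] ⊆ [-1, 2]`, inside the disk
  refine ⟨hwre, lt_of_le_of_ne hw0 fun h0 => hwE (Or.inl ?_), hwh⟩
  have h1 : -1 ≤ tN (n + 1) := tN_zero ▸ tN_strictMono.monotone (Nat.zero_le _)
  have hre : |w.re| ≤ 2 :=
    abs_le.2 ⟨by linarith [hwre.1], by linarith [hwre.2, sN_lt_two (n + 1)]⟩
  rw [mem_closedBall_zero_iff]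
  calc ‖w‖ ≤ |w.re| + |w.im| := norm_le_abs_re_add_abs_im w
    _ ≤ r := by rw [← h0, abs_zero, add_zero]; linarith

lemma not_isBounded_boundedCompUnion {r : ℝ} (hr : 2 ≤ r) :
    ¬ IsBounded (boundedCompUnion (closedBall 0 r ∪ ⋃ n, FF n)) := by
  rw [isBounded_iff_forall_norm_le]
  push Not
  intro C
  obtain ⟨n, hn⟩ := exists_nat_gt (max r C)
  have h1 := tN_lt_sN (n + 1)
  set z : ℂ := ⟨(tN (n + 1) + sN (n + 1)) / 2, n + 2⁻¹⟩
  have hz : z ∈ Ioo (tN (n + 1)) (sN (n + 1)) ×ℂ Ioo 0 ((n : ℝ) + 1) :=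
    ⟨⟨show tN (n + 1) < (tN (n + 1) + sN (n + 1)) / 2 by linarith,
      show (tN (n + 1) + sN (n + 1)) / 2 < sN (n + 1) by linarith⟩,
      show (0 : ℝ) < n + 2⁻¹ by positivity, show (n : ℝ) + 2⁻¹ < n + 1 by linarith⟩
  have hnorm : (n : ℝ) + 2⁻¹ ≤ ‖z‖ := (le_abs_self _).trans (abs_im_le_norm z)
  have hzE : z ∈ (closedBall 0 r ∪ ⋃ m, FF m)ᶜ := by
    rintro (hzr | hzF)
    · rw [mem_closedBall_zero_iff] at hzr
      linarith [le_max_left r C]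
    · exact Ioo_reProdIm_Ioo_subset_compl_arch h1.le (by positivity) hz
        (mem_FF_of_mem_iUnion ⟨hz.1.1.le, hz.1.2.trans (sN_lt_tN_succ _)⟩ hzF)
  have hbdd : IsBounded (connectedComponentIn (closedBall 0 r ∪ ⋃ m, FF m)ᶜ z) :=
    ((isBounded_Ioo _ _).reProdIm (isBounded_Ioo _ _)).subset
      (connectedComponentIn_subset_Ioo_reProdIm_Ioo hr n hz hzE)
  exact ⟨z, ⟨_, ⟨⟨z, hzE, rfl⟩, hbdd⟩, mem_connectedComponentIn hzE⟩,
    by linarith [le_max_right r C]⟩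

end Example

theorem stmt15 :
    Pairwise (fun m n => Disjoint (FF m) (FF n)) ∧
    (∀ n : ℕ, ArakelianC (FF n)) ∧
    IsClosed (⋃ n, FF n) ∧
    IsConnected (sphereCompl (⋃ n, FF n)) ∧
    (∀ r : ℝ, 2 ≤ r →
      ¬ Bornology.IsBounded
        (boundedCompUnion (Metric.closedBall (0:ℂ) r ∪ ⋃ n, FF n))) ∧
    ¬ ArakelianC (⋃ n, FF n) :=
  ⟨pairwise_disjoint_FF, arakelianC_FF, isClosed_iUnion_FF, isConnected_sphereCompl_iUnion_FF,
    fun _ hr => not_isBounded_boundedCompUnion hr,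
    fun h => not_isBounded_boundedCompUnion le_rfl (h.isBounded_boundedCompUnion 2)⟩
end
end

section
/- Let Ω ⊆ ℂ be open and F ⊆ Ω relatively closed with no holes in Ω. Suppose there exists a compact set K ⊆ Ω such that the union of all holes of F ∪ K in Ω is not contained in any compact subset of Ω. Then there exists a sequence of holes B₁, B₂, … of F ∪ K in Ω and points xₙ ∈ Bₙ with xₙ → α in Ω ∪ {α}. -/
open Topology Filter Set

noncomputable section

/-!
Exhaust `Ω` by an increasing sequence of compact sets `Kₙ`. Since the union of the holes of
`F ∪ K` lies in no compact subset of `Ω`, it contains a point `xₙ ∉ Kₙ`, lying in some hole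
`Bₙ`. Every compact subset of `Ω` is contained in some `Kₙ`, so `xₙ → α`.
-/

theorem exists_seq_mem_tendsto_cocompact {X : Type*} [TopologicalSpace X]
    [WeaklyLocallyCompactSpace X] [SigmaCompactSpace X] {S : Set X}
    (hS : ∀ L, IsCompact L → ¬ S ⊆ L) :
    ∃ x : ℕ → X, (∀ n, x n ∈ S) ∧ Tendsto x atTop (cocompact X) := by
  let K := CompactExhaustion.choice X
  have hescape : ∀ n, ∃ x ∈ S, x ∉ K n := fun n => not_subset.1 (hS _ (K.isCompact n))
  choose x hxS hxK using hescape
  refine ⟨x, hxS, hasBasis_cocompact.tendsto_right_iff.2 fun L hL => ?_⟩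
  obtain ⟨N, hLN⟩ := K.exists_superset_of_isCompact hL
  filter_upwards [eventually_ge_atTop N] with n hn hxL
  exact hxK n (K.subset hn (hLN hxL))

theorem IsOpen.exists_seq_mem_eventually_notMem_of_isCompact {X : Type*} [TopologicalSpace X]
    [LocallyCompactSpace X] [SecondCountableTopology X] {Ω S : Set X} (hΩ : IsOpen Ω)
    (hSΩ : S ⊆ Ω) (hS : ∀ L, IsCompact L → L ⊆ Ω → ¬ S ⊆ L) :
    ∃ x : ℕ → X, (∀ n, x n ∈ S) ∧ ∀ L, IsCompact L → L ⊆ Ω → ∀ᶠ n in atTop, x n ∉ L := by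
  have : LocallyCompactSpace Ω := hΩ.locallyCompactSpace
  have hS' : ∀ L : Set Ω, IsCompact L → ¬ (↑) ⁻¹' S ⊆ L := fun L hL hSL =>
    hS _ (hL.image continuous_subtype_val) (image_subset_iff.2 fun y _ => y.2) fun x hx =>
      ⟨⟨x, hSΩ hx⟩, hSL hx, rfl⟩
  obtain ⟨x, hxS, hx⟩ := exists_seq_mem_tendsto_cocompact hS'
  refine ⟨fun n => x n, hxS, fun L hL hLΩ => ?_⟩
  have hL' : IsCompact (((↑) : Ω → X) ⁻¹' L) :=
    IsInducing.subtypeVal.isCompact_preimage' hL (by rwa [Subtype.range_coe])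
  exact hx.eventually (hasBasis_cocompact.mem_of_mem hL')

theorem holesUnion_subset (Ω E : Set ℂ) : holesUnion Ω E ⊆ Ω :=
  sUnion_subset fun _ ⟨_, _, _, hKΩ, hBK⟩ => hBK.trans hKΩ

theorem stmt18_general (Ω F K : Set ℂ) (hΩ : IsOpen Ω)
    (hbig : ¬ ∃ L : Set ℂ, IsCompact L ∧ L ⊆ Ω ∧ holesUnion Ω (F ∪ K) ⊆ L) :
    ∃ B : ℕ → Set ℂ, ∃ x : ℕ → ℂ,
      (∀ n, IsHole Ω (F ∪ K) (B n)) ∧ (∀ n, x n ∈ B n) ∧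
      ∀ L : Set ℂ, IsCompact L → L ⊆ Ω → ∀ᶠ n in atTop, x n ∉ L := by
  obtain ⟨x, hx, hescape⟩ := hΩ.exists_seq_mem_eventually_notMem_of_isCompact
    (holesUnion_subset Ω (F ∪ K)) fun L hL hLΩ hsub => hbig ⟨L, hL, hLΩ, hsub⟩
  choose B hB hxB using fun n => mem_sUnion.1 (hx n)
  exact ⟨B, x, hB, hxB, hescape⟩

theorem stmt18 (Ω F K : Set ℂ) (hΩ : IsOpen Ω) (hF : RelClosed Ω F)
    (hnoholes : ∀ B : Set ℂ, ¬ IsHole Ω F B)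
    (hK : IsCompact K) (hKΩ : K ⊆ Ω)
    (hbig : ¬ ∃ L : Set ℂ, IsCompact L ∧ L ⊆ Ω ∧ holesUnion Ω (F ∪ K) ⊆ L) :
    ∃ B : ℕ → Set ℂ, ∃ x : ℕ → ℂ,
      (∀ n, IsHole Ω (F ∪ K) (B n)) ∧ (∀ n, x n ∈ B n) ∧
      ∀ L : Set ℂ, IsCompact L → L ⊆ Ω → ∀ᶠ n in atTop, x n ∉ L :=
  stmt18_general Ω F K hΩ hbig
end
end

section
/- Let Ω ⊆ ℂ be open, and let (Kₙ) be an exhaustion of Ω by compact sets with Kₙ ⊆ interior(Kₙ₊₁) and each Kₙ without holes in Ω. Let F ⊆ Ω be relatively closed without holes in Ω. If for every n the union of all holes of F ∪ Kₙ in Ω is contained in a compact subset of Ω, then for every compact K ⊆ Ω the union of all holes of F ∪ K in Ω is contained in a compact subset of Ω. -/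
open Topology Filter Set

noncomputable section

/-!
Enlarging `E` to `E' ⊇ E` can only shrink components of the complement, so every point of a
hole of `E` lies either in `E' \ E` or in a hole of `E'`. Choosing `E' = F ∪ Kₙ` with
`K ⊆ Kₙ`, the holes of `F ∪ K` lie in the compact set `Kₙ ∪ L`, where `L` is a compact set
containing the holes of `F ∪ Kₙ`.
-/

theorem IsCompact.exists_subset_interior_of_monotone {X : Type*} [TopologicalSpace X]
    {C : Set X} (hC : IsCompact C) {K : ℕ → Set X} (hK : Monotone K)
    (hCK : C ⊆ ⋃ n, interior (K n)) : ∃ n, C ⊆ interior (K n) :=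
  hC.elim_directed_cover _ (fun _ => isOpen_interior) hCK
    (Monotone.directed_le fun _ _ hmn => interior_mono (hK hmn))

theorem holesUnion_subset_diff_union_holesUnion {Ω E E' : Set ℂ} (hEE' : E ⊆ E') :
    holesUnion Ω E ⊆ (E' \ E) ∪ holesUnion Ω E' := by
  rintro y ⟨B, ⟨⟨x, -, rfl⟩, L, hLc, hLΩ, hBL⟩, hyB⟩
  have hy : y ∈ Ω \ E := connectedComponentIn_subset _ _ hyB
  by_cases hyE' : y ∈ E'
  · exact Or.inl ⟨hyE', hy.2⟩
  have hy' : y ∈ Ω \ E' := ⟨hy.1, hyE'⟩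
  refine Or.inr ⟨connectedComponentIn (Ω \ E') y, ⟨⟨y, hy', rfl⟩, L, hLc, hLΩ, ?_⟩,
    mem_connectedComponentIn hy'⟩
  calc connectedComponentIn (Ω \ E') y
      ⊆ connectedComponentIn (Ω \ E) y :=
        connectedComponentIn_mono y (sdiff_subset_sdiff_right hEE')
    _ = connectedComponentIn (Ω \ E) x := (connectedComponentIn_eq hyB).symm
    _ ⊆ L := hBL

theorem stmt19_general (Ω F : Set ℂ)
    (K : ℕ → Set ℂ) (hKc : ∀ n, IsCompact (K n)) (hKΩ : ∀ n, K n ⊆ Ω)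
    (hKmono : ∀ n, K n ⊆ interior (K (n+1)))
    (hKexh : ⋃ n, interior (K n) = Ω)
    (h : ∀ n, ∃ L : Set ℂ, IsCompact L ∧ L ⊆ Ω ∧ holesUnion Ω (F ∪ K n) ⊆ L) :
    ∀ C : Set ℂ, IsCompact C → C ⊆ Ω →
      ∃ L : Set ℂ, IsCompact L ∧ L ⊆ Ω ∧ holesUnion Ω (F ∪ C) ⊆ L := by
  intro C hC hCΩ
  have hK : Monotone K := monotone_nat_of_le_succ fun n => (hKmono n).trans interior_subset
  obtain ⟨n, hCn⟩ := hC.exists_subset_interior_of_monotone hK (hKexh ▸ hCΩ)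
  obtain ⟨L, hLc, hLΩ, hL⟩ := h n
  refine ⟨K n ∪ L, (hKc n).union hLc, union_subset (hKΩ n) hLΩ, ?_⟩
  calc holesUnion Ω (F ∪ C)
      ⊆ ((F ∪ K n) \ (F ∪ C)) ∪ holesUnion Ω (F ∪ K n) :=
        holesUnion_subset_diff_union_holesUnion (union_subset_union_right F
          (hCn.trans interior_subset))
    _ ⊆ K n ∪ L :=
        union_subset_union (fun y hy => hy.1.resolve_left fun hyF => hy.2 (Or.inl hyF)) hL

theorem stmt19 (Ω F : Set ℂ) (hΩ : IsOpen Ω) (hF : RelClosed Ω F)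
    (hFnoholes : ∀ B : Set ℂ, ¬ IsHole Ω F B)
    (K : ℕ → Set ℂ) (hKc : ∀ n, IsCompact (K n)) (hKΩ : ∀ n, K n ⊆ Ω)
    (hKmono : ∀ n, K n ⊆ interior (K (n+1)))
    (hKexh : ⋃ n, interior (K n) = Ω)
    (hKnoholes : ∀ n, ∀ B : Set ℂ, ¬ IsHole Ω (K n) B)
    (h : ∀ n, ∃ L : Set ℂ, IsCompact L ∧ L ⊆ Ω ∧ holesUnion Ω (F ∪ K n) ⊆ L) :
    ∀ C : Set ℂ, IsCompact C → C ⊆ Ω →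
      ∃ L : Set ℂ, IsCompact L ∧ L ⊆ Ω ∧ holesUnion Ω (F ∪ C) ⊆ L :=
  stmt19_general Ω F K hKc hKΩ hKmono hKexh h
end
end
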